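/- arXiv:1911.06399 — 2 statements merged into one kernel-verified Lean document; each statement's English description precedes it below -/
import Mathlib

section
/- In any model category, a cofibration f : A → B is a weak equivalence if and only if f has the left lifting property with respect to all fibrations between fibrant objects. -/
open CategoryTheory CategoryTheory.Limits

universe v u

/-- `f` is a retract of `g` in the arrow category. -/
def RetractOf {C : Type u} [Category.{v} C] {X Y Z W : C} (f : X ⟶ Y) (g : Z ⟶ W) : Prop :=
  ∃ (i : X ⟶ Z) (r : Z ⟶ X) (i' : Y ⟶ W) (r' : W ⟶ Y),
    i ≫ r = 𝟙 X ∧ i' ≫ r' = 𝟙 Y ∧ i ≫ g = f ≫ i' ∧ g ≫ r' = r ≫ f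

/-- A (Quillen) model structure on a category `C`: classes of weak equivalences,
cofibrations and fibrations satisfying two-out-of-three, retract closure,
lifting and factorization axioms. -/
structure ModelStructure (C : Type u) [Category.{v} C] where
  W : MorphismProperty C
  Cof : MorphismProperty C
  Fib : MorphismProperty C
  W_id : ∀ X : C, W (𝟙 X)
  W_comp : ∀ {X Y Z : C} (f : X ⟶ Y) (g : Y ⟶ Z), W f → W g → W (f ≫ g)
  W_cancel_left : ∀ {X Y Z : C} (f : X ⟶ Y) (g : Y ⟶ Z), W g → W (f ≫ g) → W f
  W_cancel_right : ∀ {X Y Z : C} (f : X ⟶ Y) (g : Y ⟶ Z), W f → W (f ≫ g) → W g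
  W_retract : ∀ {X Y Z W' : C} {f : X ⟶ Y} {g : Z ⟶ W'}, RetractOf f g → W g → W f
  Cof_retract : ∀ {X Y Z W' : C} {f : X ⟶ Y} {g : Z ⟶ W'}, RetractOf f g → Cof g → Cof f
  Fib_retract : ∀ {X Y Z W' : C} {f : X ⟶ Y} {g : Z ⟶ W'}, RetractOf f g → Fib g → Fib f
  lift_cof_trivFib : ∀ {A B X Y : C} (i : A ⟶ B) (p : X ⟶ Y),
    Cof i → Fib p → W p → HasLiftingProperty i p
  lift_trivCof_fib : ∀ {A B X Y : C} (i : A ⟶ B) (p : X ⟶ Y),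
    Cof i → W i → Fib p → HasLiftingProperty i p
  factor_cof_trivFib : ∀ {X Y : C} (f : X ⟶ Y),
    ∃ (Z : C) (i : X ⟶ Z) (p : Z ⟶ Y), Cof i ∧ Fib p ∧ W p ∧ i ≫ p = f
  factor_trivCof_fib : ∀ {X Y : C} (f : X ⟶ Y),
    ∃ (Z : C) (i : X ⟶ Z) (p : Z ⟶ Y), Cof i ∧ W i ∧ Fib p ∧ i ≫ p = f

/-!
If a cofibration `f : A ⟶ B` lifts against fibrations between fibrant objects, compose it with a
fibrant replacement `j : B ⟶ RB` and factor `f ≫ j` as a trivial cofibration `i` followed by a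
fibration `q`. Then `q` is a fibration between fibrant objects, so `f ≫ j` lifts against `q`, and
the retract argument exhibits `f ≫ j` as a retract of `i`. Hence `f ≫ j` is a weak equivalence,
and so is `f` by two-out-of-three.
-/

section RetractArgument

variable {C : Type u} [Category.{v} C] {X Y Z : C} {f : X ⟶ Y} {i : X ⟶ Z} {p : Z ⟶ Y}

lemma RetractOf.of_fac_of_hasLiftingProperty_left (hfac : i ≫ p = f)
    [HasLiftingProperty f p] : RetractOf f i :=
  have sq : CommSq i f p (𝟙 Y) := ⟨by simp [hfac]⟩
  ⟨𝟙 X, 𝟙 X, sq.lift, p, by simp, sq.fac_right, by simp [sq.fac_left], by simp [hfac]⟩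

lemma RetractOf.of_fac_of_hasLiftingProperty_right (hfac : i ≫ p = f)
    [HasLiftingProperty i f] : RetractOf f p :=
  have sq : CommSq (𝟙 X) i f p := ⟨by simp [hfac]⟩
  ⟨i, sq.lift, 𝟙 Y, 𝟙 Y, sq.fac_left, by simp, by simp [hfac], by simp [sq.fac_right]⟩

end RetractArgument

namespace ModelStructure

variable {C : Type u} [Category.{v} C] (M : ModelStructure C)

lemma fib_comp {X Y Z : C} {p : X ⟶ Y} {q : Y ⟶ Z} (hp : M.Fib p) (hq : M.Fib q) :
    M.Fib (p ≫ q) := by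
  obtain ⟨_, i, r, hi_cof, hi_w, hr_fib, hfac⟩ := M.factor_trivCof_fib (p ≫ q)
  have := M.lift_trivCof_fib i p hi_cof hi_w hp
  have := M.lift_trivCof_fib i q hi_cof hi_w hq
  exact M.Fib_retract (.of_fac_of_hasLiftingProperty_right hfac) hr_fib

variable [HasTerminal C]

lemma fib_terminal_from_of_fib {X Y : C} {p : X ⟶ Y} (hp : M.Fib p)
    (hY : M.Fib (terminal.from Y)) : M.Fib (terminal.from X) := by
  rw [terminal.hom_ext (terminal.from X) (p ≫ terminal.from Y)]
  exact M.fib_comp hp hY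

lemma exists_fibrant_replacement (X : C) :
    ∃ (RX : C) (j : X ⟶ RX), M.Cof j ∧ M.W j ∧ M.Fib (terminal.from RX) := by
  obtain ⟨RX, j, p, hj_cof, hj_w, hp, -⟩ := M.factor_trivCof_fib (terminal.from X)
  exact ⟨RX, j, hj_cof, hj_w, terminal.hom_ext p (terminal.from RX) ▸ hp⟩

end ModelStructure

theorem cofibration_weq_iff_llp_fibrations_between_fibrant_general
    {C : Type u} [Category.{v} C] [HasLimits C]
    (M : ModelStructure C) {A B : C} (f : A ⟶ B) (hf : M.Cof f) :
    M.W f ↔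
      ∀ {X Y : C} (p : X ⟶ Y), M.Fib p →
        M.Fib (terminal.from X) → M.Fib (terminal.from Y) →
          HasLiftingProperty f p := by
  refine ⟨fun hw _ _ p hp _ _ => M.lift_trivCof_fib f p hf hw hp, fun H => ?_⟩
  obtain ⟨RB, j, hj_cof, hj_w, hRB⟩ := M.exists_fibrant_replacement B
  obtain ⟨Z, i, q, hi_cof, hi_w, hq, hfac⟩ := M.factor_trivCof_fib (f ≫ j)
  have := H q hq (M.fib_terminal_from_of_fib hq hRB) hRB
  have := M.lift_trivCof_fib j q hj_cof hj_w hq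
  have hw : M.W (f ≫ j) := M.W_retract (.of_fac_of_hasLiftingProperty_left hfac) hi_w
  exact M.W_cancel_left f j hj_w hw

/-- **Cofibrations that are weak equivalences via lifting.** In any model category,
a cofibration `f : A ⟶ B` is a weak equivalence if and only if it has the left
lifting property with respect to all fibrations between fibrant objects. -/
theorem cofibration_weq_iff_llp_fibrations_between_fibrant
    {C : Type u} [Category.{v} C] [HasLimits C] [HasColimits C]
    (M : ModelStructure C) {A B : C} (f : A ⟶ B) (hf : M.Cof f) :
    M.W f ↔
      ∀ {X Y : C} (p : X ⟶ Y), M.Fib p →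
        M.Fib (terminal.from X) → M.Fib (terminal.from Y) →
          HasLiftingProperty f p :=
  cofibration_weq_iff_llp_fibrations_between_fibrant_general M f hf
end

section
/- If weak equivalences in a category with weak equivalences are closed under filtered colimits (in the sense that a natural transformation of filtered diagrams which is a levelwise weak equivalence induces a weak equivalence on colimits), then the same closure property holds after enlarging the class of weak equivalences (i.e., for any larger class of weak equivalences containing the original ones that is also detected levelwise from the smaller class by a left Bousfield localization-style condition: colimᵢ Cᵢ remains a homotopy colimit). -/
open CategoryTheory CategoryTheory.Limits

universe v u

/-- A class of maps is closed under filtered colimits if a levelwise member of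
the class between filtered diagrams induces a member of the class on colimits
(equivalently, filtered colimits compute homotopy colimits). -/
def ClosedUnderFilteredColimits {M : Type u} [Category.{v} M] [HasColimits M]
    (W : MorphismProperty M) : Prop :=
  ∀ (I : Type v) [SmallCategory I] [IsFiltered I] (F G : I ⥤ M) (α : F ⟶ G),
    (∀ i : I, W (α.app i)) → W (colimMap α)

/-!
A functor `L` preserving filtered colimits identifies `L (colim α)` with `colim (α ⋙ L)` as
arrows, so whenever `W` is closed under filtered colimits and invariant under isomorphisms of
arrows, so is the class `W'` of maps that `L` sends into `W`.
-/

universe u'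

theorem ClosedUnderFilteredColimits.inverseImage {M : Type u} [Category.{v} M] [HasColimits M]
    {N : Type u'} [Category.{v} N] [HasColimits N] {W : MorphismProperty N} [W.RespectsIso]
    (hW : ClosedUnderFilteredColimits W) (L : M ⥤ N) [PreservesFilteredColimits L] :
    ClosedUnderFilteredColimits (W.inverseImage L) := by
  intro I _ _ F G α hα
  have e : Arrow.mk (L.map (colimMap α)) ≅ Arrow.mk (colimMap (Functor.whiskerRight α L)) :=
    Arrow.isoOfNatIso (preservesColimitNatIso L) (Arrow.mk α)
  exact (W.arrow_mk_iso_iff e).2 (hW I _ _ _ hα)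

theorem closedUnderFilteredColimits_of_localization_general
    {M : Type u} [Category.{v} M] [HasColimits M]
    (W W' : MorphismProperty M) (hiso : W.RespectsIso)
    (L : M ⥤ M) [PreservesFilteredColimits L]
    (hdetect : ∀ {X Y : M} (f : X ⟶ Y), W' f ↔ W (L.map f))
    (hW : ClosedUnderFilteredColimits W) :
    ClosedUnderFilteredColimits W' := by
  obtain rfl : W' = W.inverseImage L := by
    ext X Y f
    exact hdetect f
  exact hW.inverseImage L

/-- **Closure under filtered colimits is preserved by localization.** If the weak
equivalences `W` are closed under filtered colimits, then so is any larger class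
`W'` containing `W` which is detected from `W` in a left Bousfield
localization-style manner, i.e. via a localization functor `L` preserving
filtered colimits with `W' f ↔ W (L f)`: filtered colimits remain homotopy
colimits for `W'`. -/
theorem closedUnderFilteredColimits_of_localization
    {M : Type u} [Category.{v} M] [HasColimits M]
    (W W' : MorphismProperty M) (hiso : W.RespectsIso)
    (L : M ⥤ M) [PreservesFilteredColimits L]
    (hdetect : ∀ {X Y : M} (f : X ⟶ Y), W' f ↔ W (L.map f))
    (hsub : ∀ {X Y : M} (f : X ⟶ Y), W f → W' f)
    (hW : ClosedUnderFilteredColimits W) :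
    ClosedUnderFilteredColimits W' :=
  closedUnderFilteredColimits_of_localization_general W W' hiso L hdetect hW
end
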